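/- Let ι be a finite nonempty index type, let M : ι → ι → ℝ have all entries strictly positive, let β ≥ 1, and let τ ≥ 0 be such that d_H(S(x), S(y)) ≤ τ · d_H(x, y) and d_H(M x, M y) ≤ τ · d_H(x, y) for all strictly positive x, y : ι → ℝ, where S(u)_i = ∑_k u_k · M_{k i} and (M u)_j = ∑_i M_{j i} · u_i. Then the ratio map R(u)_j = S(u)_j^{1/β} / ( ∑_i M_{j i} · u_i^{−1/β} · S(u)_i^{(1−β)/β} ) satisfies d_H(R(x), R(y)) ≤ ( (2τ + τ²(β − 1)) / β ) · d_H(x, y) for all strictly positive x, y. -/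
import Mathlib

open Finset Real

/-- Hilbert projective metric on strictly positive vectors:
`d_H(x,y) = log (max_i x i / y i) - log (min_i x i / y i)`. -/
noncomputable def dH {ι : Type*} [Fintype ι] [Nonempty ι] (x y : ι → ℝ) : ℝ :=
  Real.log (⨆ i, x i / y i) - Real.log (⨅ i, x i / y i)

/-- `S(u) i = ∑ k, u k * M k i`. -/
noncomputable def eveS {ι : Type*} [Fintype ι] (M : ι → ι → ℝ) (u : ι → ℝ) : ι → ℝ :=
  fun i => ∑ k, u k * M k i

section Aux
variable {ι : Type*} [Fintype ι] [Nonempty ι]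

/-- max of log-differences -/
noncomputable def Dmax (x y : ι → ℝ) : ℝ :=
  Finset.univ.sup' Finset.univ_nonempty (fun i => Real.log (x i) - Real.log (y i))

lemma Dmax_le {x y : ι → ℝ} {c : ℝ} (h : ∀ i, Real.log (x i) - Real.log (y i) ≤ c) :
    Dmax x y ≤ c := Finset.sup'_le _ _ fun i _ => h i

lemma le_Dmax (x y : ι → ℝ) (i : ι) : Real.log (x i) - Real.log (y i) ≤ Dmax x y :=
  Finset.le_sup' (fun i => Real.log (x i) - Real.log (y i)) (Finset.mem_univ i)

lemma log_iSup {x : ι → ℝ} (hx : ∀ i, 0 < x i) :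
    Real.log (⨆ i, x i) = Finset.univ.sup' Finset.univ_nonempty (fun i => Real.log (x i)) := by
  obtain ⟨i, -, hi⟩ := Finset.exists_mem_eq_sup' (Finset.univ_nonempty (α := ι)) x
  rw [← Finset.sup'_univ_eq_ciSup, hi]
  apply le_antisymm
  · exact Finset.le_sup' (fun i => Real.log (x i)) (Finset.mem_univ i)
  · exact Finset.sup'_le _ _ fun j _ =>
      Real.log_le_log (hx j) ((Finset.le_sup' x (Finset.mem_univ j)).trans hi.le)

lemma log_iInf {x : ι → ℝ} (hx : ∀ i, 0 < x i) :
    Real.log (⨅ i, x i) = Finset.univ.inf' Finset.univ_nonempty (fun i => Real.log (x i)) := by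
  obtain ⟨i, -, hi⟩ := Finset.exists_mem_eq_inf' (Finset.univ_nonempty (α := ι)) x
  rw [← Finset.inf'_univ_eq_ciInf, hi]
  apply le_antisymm
  · exact Finset.le_inf' _ _ fun j _ =>
      Real.log_le_log (hx i) (hi.ge.trans (Finset.inf'_le x (Finset.mem_univ j)))
  · exact Finset.inf'_le (fun i => Real.log (x i)) (Finset.mem_univ i)

lemma neg_inf' (f : ι → ℝ) :
    - Finset.univ.inf' Finset.univ_nonempty f
      = Finset.univ.sup' Finset.univ_nonempty (fun i => - f i) := by
  apply le_antisymm
  · obtain ⟨i, -, hi⟩ := Finset.exists_mem_eq_inf' (Finset.univ_nonempty (α := ι)) f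
    rw [hi]
    exact Finset.le_sup' (fun i => - f i) (Finset.mem_univ i)
  · exact Finset.sup'_le _ _ fun i _ => neg_le_neg (Finset.inf'_le f (Finset.mem_univ i))

lemma dH_eq_Dmax {x y : ι → ℝ} (hx : ∀ i, 0 < x i) (hy : ∀ i, 0 < y i) :
    dH x y = Dmax x y + Dmax y x := by
  have h1 : Real.log (⨆ i, x i / y i) = Dmax x y := by
    rw [log_iSup (fun i => div_pos (hx i) (hy i))]
    exact Finset.sup'_congr _ rfl fun i _ => Real.log_div (hx i).ne' (hy i).ne'
  have h2 : - Real.log (⨅ i, x i / y i) = Dmax y x := by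
    rw [log_iInf (fun i => div_pos (hx i) (hy i)), neg_inf']
    exact Finset.sup'_congr _ rfl fun i _ => by
      rw [Real.log_div (hx i).ne' (hy i).ne']; ring
  rw [dH, sub_eq_add_neg, h1, h2]

lemma Dmax_mul_le {x y z w : ι → ℝ} (hx : ∀ i, 0 < x i) (hy : ∀ i, 0 < y i)
    (hz : ∀ i, 0 < z i) (hw : ∀ i, 0 < w i) :
    Dmax (fun i => x i * z i) (fun i => y i * w i) ≤ Dmax x y + Dmax z w := by
  apply Dmax_le
  intro i
  rw [Real.log_mul (hx i).ne' (hz i).ne', Real.log_mul (hy i).ne' (hw i).ne']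
  have := le_Dmax x y i
  have := le_Dmax z w i
  linarith

lemma Dmax_div_le {x y z w : ι → ℝ} (hx : ∀ i, 0 < x i) (hy : ∀ i, 0 < y i)
    (hz : ∀ i, 0 < z i) (hw : ∀ i, 0 < w i) :
    Dmax (fun i => x i / z i) (fun i => y i / w i) ≤ Dmax x y + Dmax w z := by
  apply Dmax_le
  intro i
  rw [Real.log_div (hx i).ne' (hz i).ne', Real.log_div (hy i).ne' (hw i).ne']
  have := le_Dmax x y i
  have := le_Dmax w z i
  linarith

lemma Dmax_rpow {x y : ι → ℝ} (hx : ∀ i, 0 < x i) (hy : ∀ i, 0 < y i) {a : ℝ} (ha : 0 ≤ a) :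
    Dmax (fun i => x i ^ a) (fun i => y i ^ a) = a * Dmax x y := by
  have : ∀ i, Real.log (x i ^ a) - Real.log (y i ^ a)
      = a * (Real.log (x i) - Real.log (y i)) := fun i => by
    rw [Real.log_rpow (hx i), Real.log_rpow (hy i)]; ring
  unfold Dmax
  rw [Finset.sup'_congr _ rfl (fun i _ => this i)]
  obtain ⟨i, -, hi⟩ := Finset.exists_mem_eq_sup' (Finset.univ_nonempty (α := ι))
    (fun i => Real.log (x i) - Real.log (y i))
  apply le_antisymm
  · exact Finset.sup'_le _ _ fun j _ => mul_le_mul_of_nonneg_left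
      (Finset.le_sup' (fun i => Real.log (x i) - Real.log (y i)) (Finset.mem_univ j)) ha
  · rw [hi]
    exact Finset.le_sup' (fun i => a * (Real.log (x i) - Real.log (y i))) (Finset.mem_univ i)

/-- `dH` of equal nonnegative powers. -/
lemma dH_rpow {x y : ι → ℝ} (hx : ∀ i, 0 < x i) (hy : ∀ i, 0 < y i) {a : ℝ} (ha : 0 ≤ a) :
    dH (fun i => x i ^ a) (fun i => y i ^ a) = a * dH x y := by
  rw [dH_eq_Dmax (fun i => Real.rpow_pos_of_pos (hx i) a)
    (fun i => Real.rpow_pos_of_pos (hy i) a), dH_eq_Dmax hx hy,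
    Dmax_rpow hx hy ha, Dmax_rpow hy hx ha]
  ring

/-- `dH` of equal nonpositive powers. -/
lemma dH_rpow_neg {x y : ι → ℝ} (hx : ∀ i, 0 < x i) (hy : ∀ i, 0 < y i) {a : ℝ} (ha : 0 ≤ a) :
    dH (fun i => x i ^ (-a)) (fun i => y i ^ (-a)) = a * dH x y := by
  have hx' : ∀ i, (0:ℝ) < x i ^ (-a) := fun i => Real.rpow_pos_of_pos (hx i) _
  have hy' : ∀ i, (0:ℝ) < y i ^ (-a) := fun i => Real.rpow_pos_of_pos (hy i) _
  have key : ∀ (u v : ι → ℝ), (∀ i, 0 < u i) → (∀ i, 0 < v i) →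
      Dmax (fun i => u i ^ (-a)) (fun i => v i ^ (-a)) = a * Dmax v u := by
    intro u v hu hv
    have : Dmax (fun i => u i ^ (-a)) (fun i => v i ^ (-a))
        = Dmax (fun i => v i ^ a) (fun i => u i ^ a) := by
      unfold Dmax
      apply Finset.sup'_congr _ rfl
      intro i _
      rw [Real.log_rpow (hu i), Real.log_rpow (hv i), Real.log_rpow (hu i),
        Real.log_rpow (hv i)]
      ring
    rw [this, Dmax_rpow hv hu ha]
  rw [dH_eq_Dmax hx' hy', dH_eq_Dmax hx hy, key x y hx hy, key y x hy hx]
  ring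

lemma dH_div_le {x y z w : ι → ℝ} (hx : ∀ i, 0 < x i) (hy : ∀ i, 0 < y i)
    (hz : ∀ i, 0 < z i) (hw : ∀ i, 0 < w i) :
    dH (fun i => x i / z i) (fun i => y i / w i) ≤ dH x y + dH z w := by
  rw [dH_eq_Dmax (fun i => div_pos (hx i) (hz i)) (fun i => div_pos (hy i) (hw i)),
    dH_eq_Dmax hx hy, dH_eq_Dmax hz hw]
  have h1 := Dmax_div_le hx hy hz hw
  have h2 := Dmax_div_le hy hx hw hz
  linarith

lemma dH_mul_le {x y z w : ι → ℝ} (hx : ∀ i, 0 < x i) (hy : ∀ i, 0 < y i)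
    (hz : ∀ i, 0 < z i) (hw : ∀ i, 0 < w i) :
    dH (fun i => x i * z i) (fun i => y i * w i) ≤ dH x y + dH z w := by
  rw [dH_eq_Dmax (fun i => mul_pos (hx i) (hz i)) (fun i => mul_pos (hy i) (hw i)),
    dH_eq_Dmax hx hy, dH_eq_Dmax hz hw]
  have h1 := Dmax_mul_le hx hy hz hw
  have h2 := Dmax_mul_le hy hx hw hz
  linarith

lemma eveS_pos {M : ι → ι → ℝ} (hM : ∀ i j, 0 < M i j) {u : ι → ℝ} (hu : ∀ i, 0 < u i) :
    ∀ i, 0 < eveS M u i := fun i =>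
  Finset.sum_pos (fun k _ => mul_pos (hu k) (hM k i)) Finset.univ_nonempty

end Aux

/-- if both `S` and `u ↦ M u` are `τ`-contractions in the Hilbert projective
metric on strictly positive vectors, then for `β ≥ 1` the ratio map
`R(u) j = S(u) j ^ (1/β) / (∑ i, M j i * u i ^ (-1/β) * S(u) i ^ ((1-β)/β))` satisfies
`d_H(R(x), R(y)) ≤ ((2τ + τ²(β-1))/β) * d_H(x, y)`. Powers are real powers. -/
theorem eve_ratio_contraction {ι : Type*} [Fintype ι] [Nonempty ι]
    (M : ι → ι → ℝ) (hM : ∀ i j, 0 < M i j)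
    (β : ℝ) (hβ : 1 ≤ β) (τ : ℝ) (hτ : 0 ≤ τ)
    (hS : ∀ x y : ι → ℝ, (∀ i, 0 < x i) → (∀ i, 0 < y i) →
      dH (eveS M x) (eveS M y) ≤ τ * dH x y)
    (hMap : ∀ x y : ι → ℝ, (∀ i, 0 < x i) → (∀ i, 0 < y i) →
      dH (fun j => ∑ i, M j i * x i) (fun j => ∑ i, M j i * y i) ≤ τ * dH x y) :
    ∀ x y : ι → ℝ, (∀ i, 0 < x i) → (∀ i, 0 < y i) →
      dH (fun j => eveS M x j ^ (1 / β) /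
            ∑ i, M j i * x i ^ (-1 / β) * eveS M x i ^ ((1 - β) / β))
         (fun j => eveS M y j ^ (1 / β) /
            ∑ i, M j i * y i ^ (-1 / β) * eveS M y i ^ ((1 - β) / β)) ≤
        ((2 * τ + τ ^ 2 * (β - 1)) / β) * dH x y := by
  intro x y hx hy
  have hβ0 : (0:ℝ) < β := lt_of_lt_of_le one_pos hβ
  -- positivity of everything
  have hSx := eveS_pos hM hx
  have hSy := eveS_pos hM hy
  -- the weight vectors
  set wx : ι → ℝ := fun i => x i ^ (-1 / β) * eveS M x i ^ ((1 - β) / β) with hwx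
  set wy : ι → ℝ := fun i => y i ^ (-1 / β) * eveS M y i ^ ((1 - β) / β) with hwy
  have hwxp : ∀ i, 0 < wx i := fun i =>
    mul_pos (Real.rpow_pos_of_pos (hx i) _) (Real.rpow_pos_of_pos (hSx i) _)
  have hwyp : ∀ i, 0 < wy i := fun i =>
    mul_pos (Real.rpow_pos_of_pos (hy i) _) (Real.rpow_pos_of_pos (hSy i) _)
  -- numerators and denominators
  have hAx : ∀ j, (0:ℝ) < eveS M x j ^ (1 / β) := fun j => Real.rpow_pos_of_pos (hSx j) _
  have hAy : ∀ j, (0:ℝ) < eveS M y j ^ (1 / β) := fun j => Real.rpow_pos_of_pos (hSy j) _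
  have hBx : ∀ j, (0:ℝ) < ∑ i, M j i * wx i := fun j =>
    Finset.sum_pos (fun i _ => mul_pos (hM j i) (hwxp i)) Finset.univ_nonempty
  have hBy : ∀ j, (0:ℝ) < ∑ i, M j i * wy i := fun j =>
    Finset.sum_pos (fun i _ => mul_pos (hM j i) (hwyp i)) Finset.univ_nonempty
  -- rewrite sums to match the M-map form
  have hsumx : ∀ j, (∑ i, M j i * x i ^ (-1 / β) * eveS M x i ^ ((1 - β) / β))
      = ∑ i, M j i * wx i := by
    intro j; apply Finset.sum_congr rfl; intro i _; rw [hwx]; ring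
  have hsumy : ∀ j, (∑ i, M j i * y i ^ (-1 / β) * eveS M y i ^ ((1 - β) / β))
      = ∑ i, M j i * wy i := by
    intro j; apply Finset.sum_congr rfl; intro i _; rw [hwy]; ring
  -- bound numerator part
  have hnum : dH (fun j => eveS M x j ^ (1 / β)) (fun j => eveS M y j ^ (1 / β))
      ≤ (1 / β) * (τ * dH x y) := by
    rw [dH_rpow hSx hSy (by positivity : (0:ℝ) ≤ 1 / β)]
    exact mul_le_mul_of_nonneg_left (hS x y hx hy) (by positivity)
  -- bound the weights
  have hw : dH wx wy ≤ (1 / β) * dH x y + ((β - 1) / β) * (τ * dH x y) := by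
    have h1 : dH (fun i => x i ^ (-1 / β)) (fun i => y i ^ (-1 / β))
        = (1 / β) * dH x y := by
      have : (-1 / β : ℝ) = -(1 / β) := by ring
      rw [show (fun i => x i ^ (-1 / β)) = fun i => x i ^ (-(1 / β)) by rw [this],
        show (fun i => y i ^ (-1 / β)) = fun i => y i ^ (-(1 / β)) by rw [this]]
      exact dH_rpow_neg hx hy (by positivity)
    have h2 : dH (fun i => eveS M x i ^ ((1 - β) / β)) (fun i => eveS M y i ^ ((1 - β) / β))
        = ((β - 1) / β) * dH (eveS M x) (eveS M y) := by
      have he : ((1 - β) / β : ℝ) = -((β - 1) / β) := by ring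
      rw [show (fun i => eveS M x i ^ ((1 - β) / β)) = fun i => eveS M x i ^ (-((β - 1) / β))
          by rw [he],
        show (fun i => eveS M y i ^ ((1 - β) / β)) = fun i => eveS M y i ^ (-((β - 1) / β))
          by rw [he]]
      exact dH_rpow_neg hSx hSy (div_nonneg (by linarith) hβ0.le)
    have hmul := dH_mul_le (fun i => Real.rpow_pos_of_pos (hx i) (-1/β))
      (fun i => Real.rpow_pos_of_pos (hy i) (-1/β))
      (fun i => Real.rpow_pos_of_pos (hSx i) ((1-β)/β))
      (fun i => Real.rpow_pos_of_pos (hSy i) ((1-β)/β))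
    have hSle := hS x y hx hy
    have h2' : dH (fun i => eveS M x i ^ ((1 - β) / β)) (fun i => eveS M y i ^ ((1 - β) / β))
        ≤ ((β - 1) / β) * (τ * dH x y) := by
      rw [h2]
      exact mul_le_mul_of_nonneg_left hSle (div_nonneg (by linarith) hβ0.le)
    calc dH wx wy ≤ _ := hmul
      _ ≤ _ := by rw [h1]; linarith
  -- bound denominator part
  have hden : dH (fun j => ∑ i, M j i * wx i) (fun j => ∑ i, M j i * wy i)
      ≤ τ * ((1 / β) * dH x y + ((β - 1) / β) * (τ * dH x y)) :=
    le_trans (hMap wx wy hwxp hwyp) (mul_le_mul_of_nonneg_left hw hτ)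
  -- combine
  have hquot := dH_div_le hAx hAy hBx hBy
  have hrw : (fun j => eveS M x j ^ (1 / β) /
        ∑ i, M j i * x i ^ (-1 / β) * eveS M x i ^ ((1 - β) / β))
      = fun j => eveS M x j ^ (1 / β) / ∑ i, M j i * wx i := by
    funext j; rw [hsumx j]
  have hrw' : (fun j => eveS M y j ^ (1 / β) /
        ∑ i, M j i * y i ^ (-1 / β) * eveS M y i ^ ((1 - β) / β))
      = fun j => eveS M y j ^ (1 / β) / ∑ i, M j i * wy i := by
    funext j; rw [hsumy j]
  rw [hrw, hrw']
  have hfinal : (1 / β) * (τ * dH x y) +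
      τ * ((1 / β) * dH x y + ((β - 1) / β) * (τ * dH x y))
      = ((2 * τ + τ ^ 2 * (β - 1)) / β) * dH x y := by
    field_simp
    ring
  exact le_trans hquot (le_trans (add_le_add hnum hden) (le_of_eq hfinal))
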